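/- If each loss function Q_{p,k}(·;x) has gradients uniformly bounded by B along the algorithm trajectory, then the sensitivity of the graph federated averaging algorithm satisfies Δ(i) = max_{(p,k)} ‖w_{p,k,i} - w'_{p,k,i}‖ ≤ 2μBi, where w and w' are the trajectories obtained when one client's dataset is replaced. -/
import Mathlib


/-- Sensitivity of graph federated averaging: if two runs start from the same
initialization, their stochastic gradients are bounded by `B`, and they follow
the same client-update/aggregation/combination recursions, then the client
models differ by at most `2 μ B i` at iteration `i`. -/
theorem stmt_2 (P L M : ℕ) (hL : 0 < L) (μ B : ℝ) (hμ : 0 ≤ μ) (hB : 0 ≤ B)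
    (A : Matrix (Fin P) (Fin P) ℝ)
    (hnonneg : ∀ m p, 0 ≤ A m p)
    (hstoch : ∀ p, ∑ m, A m p = 1)
    (w w' : Fin P → ℕ → EuclideanSpace ℝ (Fin M))
    (wk wk' : Fin P → Fin L → ℕ → EuclideanSpace ℝ (Fin M))
    (g g' : Fin P → Fin L → ℕ → EuclideanSpace ℝ (Fin M))
    (hg : ∀ p k i, ‖g p k i‖ ≤ B) (hg' : ∀ p k i, ‖g' p k i‖ ≤ B)
    (hclient : ∀ p k i, wk p k (i + 1) = w p i - μ • g p k (i + 1))
    (hclient' : ∀ p k i, wk' p k (i + 1) = w' p i - μ • g' p k (i + 1))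
    (hserver : ∀ p i, w p (i + 1) = ∑ m, A m p • ((L : ℝ)⁻¹ • ∑ k, wk m k (i + 1)))
    (hserver' : ∀ p i, w' p (i + 1) = ∑ m, A m p • ((L : ℝ)⁻¹ • ∑ k, wk' m k (i + 1)))
    (hinit : ∀ p, w p 0 = w' p 0) :
    ∀ p k (i : ℕ), ‖wk p k (i + 1) - wk' p k (i + 1)‖ ≤ 2 * μ * B * (i + 1) := by
  -- client difference bound from server difference bound
  have hclientstep : ∀ p k (i : ℕ), ‖wk p k (i + 1) - wk' p k (i + 1)‖ ≤
      ‖w p i - w' p i‖ + 2 * μ * B := by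
    intro p k i
    rw [hclient, hclient']
    have : w p i - μ • g p k (i + 1) - (w' p i - μ • g' p k (i + 1)) =
        (w p i - w' p i) + (μ • g' p k (i + 1) - μ • g p k (i + 1)) := by abel
    rw [this]
    refine (norm_add_le _ _).trans ?_
    gcongr
    refine (norm_sub_le _ _).trans ?_
    rw [norm_smul, norm_smul, Real.norm_eq_abs, abs_of_nonneg hμ]
    have h1 := hg' p k (i + 1)
    have h2 := hg p k (i + 1)
    nlinarith
  -- server difference bound by induction
  have hserverbd : ∀ (i : ℕ) p, ‖w p i - w' p i‖ ≤ 2 * μ * B * i := by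
    intro i
    induction i with
    | zero => intro p; simp [hinit p]
    | succ i ih =>
      intro p
      rw [hserver, hserver', ← Finset.sum_sub_distrib]
      calc ‖∑ m, (A m p • ((L : ℝ)⁻¹ • ∑ k, wk m k (i + 1)) -
              A m p • ((L : ℝ)⁻¹ • ∑ k, wk' m k (i + 1)))‖
          ≤ ∑ m, ‖A m p • ((L : ℝ)⁻¹ • ∑ k, wk m k (i + 1)) -
              A m p • ((L : ℝ)⁻¹ • ∑ k, wk' m k (i + 1))‖ := norm_sum_le _ _
        _ ≤ ∑ m : Fin P, A m p * (2 * μ * B * (i + 1)) := by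
            refine Finset.sum_le_sum fun m _ => ?_
            rw [← smul_sub, ← smul_sub, ← Finset.sum_sub_distrib, norm_smul, norm_smul,
              Real.norm_eq_abs, abs_of_nonneg (hnonneg m p), Real.norm_eq_abs,
              abs_of_nonneg (inv_nonneg.mpr (Nat.cast_nonneg L))]
            have hbd : ‖∑ k, (wk m k (i + 1) - wk' m k (i + 1))‖ ≤
                (L : ℝ) * (2 * μ * B * (i + 1)) := by
              refine (norm_sum_le _ _).trans ?_
              calc ∑ k : Fin L, ‖wk m k (i + 1) - wk' m k (i + 1)‖
                  ≤ ∑ k : Fin L, (2 * μ * B * (i + 1)) :=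
                    Finset.sum_le_sum fun k _ => (hclientstep m k i).trans (by
                      have := ih m; push_cast; nlinarith)
                _ = (L : ℝ) * (2 * μ * B * (i + 1)) := by
                    simp [mul_comm]
            have hLpos : (0 : ℝ) < L := by exact_mod_cast hL
            calc A m p * ((L : ℝ)⁻¹ * ‖∑ k, (wk m k (i + 1) - wk' m k (i + 1))‖)
                ≤ A m p * ((L : ℝ)⁻¹ * ((L : ℝ) * (2 * μ * B * (i + 1)))) := by
                  gcongr
                  exact hnonneg m p
              _ = A m p * (2 * μ * B * (i + 1)) := by
                  field_simp
        _ = 2 * μ * B * ((i : ℝ) + 1) := by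
            rw [← Finset.sum_mul, hstoch p, one_mul]
        _ = 2 * μ * B * ((i + 1 : ℕ) : ℝ) := by push_cast; ring
  intro p k i
  have := (hclientstep p k i).trans (by
    have := hserverbd i p
    push_cast
    nlinarith : ‖w p i - w' p i‖ + 2 * μ * B ≤ 2 * μ * B * (i + 1))
  exact this
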